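/- arXiv:1903.00255 — 2 statements merged into one kernel-verified Lean document; each statement's English description precedes it below -/
import Mathlib

section
/- For every integer k ≥ 2 and every integer n ≥ 1, the k-th absolute moment of X_n = log a_n with respect to the Gauss measure satisfies E_γ|X_n|^k ≤ (3/(2 log 2))·k!; in particular E_γ|X_n|^k ≤ k!·r̄^k where r̄ = √(3/(2 log 2)). -/
open MeasureTheory Set

noncomputable section

/-- The Gauss map `G(x) = 1/x - ⌊1/x⌋`. -/
def gaussMap (x : ℝ) : ℝ := 1 / x - (⌊1 / x⌋ : ℝ)

/-- The `n`-th partial quotient `a_n(ω) = ⌊1 / G^{n-1}(ω)⌋` (for `n ≥ 1`). -/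
def pq (ω : ℝ) (n : ℕ) : ℤ := ⌊1 / (gaussMap^[n - 1] ω)⌋

/-- The Gauss measure `dγ(x) = dx / ((1+x) log 2)` on `(0,1)`. -/
def gaussMeasure : Measure ℝ :=
  (volume.restrict (Ioo (0 : ℝ) 1)).withDensity
    (fun x => ENNReal.ofReal (1 / ((1 + x) * Real.log 2)))

/-- `M_n(ω) = a_1(ω) ⋯ a_n(ω)`. -/
def Mprod (ω : ℝ) (n : ℕ) : ℝ := ∏ j ∈ Finset.Icc 1 n, (pq ω j : ℝ)

/-- Khintchine's constant exponent `κ`. -/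
def kappa : ℝ := ∫ x in Ioo (0 : ℝ) 1, Real.log (⌊1 / x⌋ : ℝ) / ((1 + x) * Real.log 2)

def rbar : ℝ := Real.sqrt (3 / (2 * Real.log 2))

def Lambdabar : ℝ := 2.03

/-- `Ξ(T)`. -/
def Xi (T : ℝ) : ℝ :=
  Real.exp (-(T ^ 2) /
    (2 * (128 * rbar ^ 2 * Lambdabar + (16 * rbar * Lambdabar) ^ ((1 : ℝ) / 3) * T)
      ^ ((3 : ℝ) / 2)))

/-- The set `KL⁺(T, N)`. -/
def KLplus (T : ℝ) (N : ℕ) : Set ℝ :=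
  {ω | Irrational ω ∧ ω ∈ Ioo (0 : ℝ) 1 ∧
    ∀ n : ℕ, N ≤ n → Mprod ω n ≤ Real.exp ((kappa + T) * n)}

/-- The set `KL⁻(T, N)`. -/
def KLminus (T : ℝ) (N : ℕ) : Set ℝ :=
  {ω | Irrational ω ∧ ω ∈ Ioo (0 : ℝ) 1 ∧
    ∀ n : ℕ, N ≤ n → Real.exp ((kappa - T) * n) ≤ Mprod ω n}

end

/-- `X_n = log a_n`. -/
noncomputable def Xlog (ω : ℝ) (n : ℕ) : ℝ := Real.log (pq ω n : ℝ)

/-!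
The Gauss measure is invariant under the Gauss map `G`, so `X_n = X_1 ∘ G^[n-1]` has the law of
`X_1 = log ⌊1/ω⌋`. Invariance is the identity `∑ₘ ρ(1/(y+m+1)) / (y+m+1)² = ρ(y)` for the density
`ρ(x) = 1/((1+x) log 2)`, obtained by substituting the inverse branches `y ↦ 1/(y+m+1)` of `G`;
the sum telescopes. Then `0 ≤ log ⌊1/x⌋ ≤ -log x` and `ρ ≤ 1/log 2` give
`E|X_1|^k ≤ (1/log 2) ∫₀¹ (-log x)^k dx = k!/log 2`, which lies below both bounds since
`r̄² = 3/(2 log 2)` and `r̄ ≥ 1`.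
-/

open scoped ENNReal
open Filter Topology Function
open scoped Nat

noncomputable def gaussDensity (x : ℝ) : ℝ≥0∞ := ENNReal.ofReal (1 / ((1 + x) * Real.log 2))

@[fun_prop]
lemma measurable_gaussDensity : Measurable gaussDensity := by
  unfold gaussDensity; fun_prop

lemma measurable_gaussMap : Measurable gaussMap := by
  unfold gaussMap; fun_prop

lemma lintegral_gaussMeasure {f : ℝ → ℝ≥0∞} (hf : Measurable f) :
    ∫⁻ x, f x ∂gaussMeasure = ∫⁻ x in Ioo 0 1, gaussDensity x * f x :=
  lintegral_withDensity_eq_lintegral_mul _ measurable_gaussDensity hf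

/-- The inverse of the Gauss map on `(1 / (m + 2), 1 / (m + 1)]`, the image of `[0, 1)`. -/
noncomputable def gaussBranch (m : ℕ) (y : ℝ) : ℝ := (y + m + 1)⁻¹

@[fun_prop]
lemma measurable_gaussBranch (m : ℕ) : Measurable (gaussBranch m) := by
  unfold gaussBranch; fun_prop

lemma floor_one_div_gaussBranch (m : ℕ) {y : ℝ} (hy : y ∈ Ico 0 1) :
    ⌊1 / gaussBranch m y⌋ = m + 1 := by
  rw [gaussBranch, one_div, inv_inv, Int.floor_eq_iff]
  push_cast
  constructor <;> linarith [hy.1, hy.2]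

lemma gaussMap_gaussBranch (m : ℕ) {y : ℝ} (hy : y ∈ Ico 0 1) :
    gaussMap (gaussBranch m y) = y := by
  rw [gaussMap, floor_one_div_gaussBranch m hy, gaussBranch, one_div, inv_inv]
  push_cast
  ring

lemma gaussBranch_injective (m : ℕ) : Function.Injective (gaussBranch m) := fun y z h => by
  simpa [gaussBranch] using h

lemma hasDerivAt_gaussBranch (m : ℕ) {y : ℝ} (hy : 0 ≤ y) :
    HasDerivAt (gaussBranch m) (-((y + m + 1) ^ 2)⁻¹) y := by
  rw [show gaussBranch m = (fun x => x + (m + 1 : ℝ))⁻¹ by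
    funext z; rw [Pi.inv_apply, gaussBranch, add_assoc]]
  simpa only [← add_assoc, neg_div, one_div] using
    ((hasDerivAt_id' y).add_const (m + 1 : ℝ)).inv (by rw [← add_assoc]; positivity)

lemma iUnion_image_gaussBranch : ⋃ m : ℕ, gaussBranch m '' Ico 0 1 = Ioc 0 1 := by
  ext x
  simp only [mem_iUnion, mem_image]
  constructor
  · rintro ⟨m, y, hy, rfl⟩
    have hb : 1 ≤ y + m + 1 := by linarith [hy.1, (Nat.cast_nonneg m : (0 : ℝ) ≤ m)]
    exact ⟨by unfold gaussBranch; positivity, inv_le_one_of_one_le₀ hb⟩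
  · rintro ⟨hx0, hx1⟩
    have hfloor : 1 ≤ ⌊1 / x⌋ := Int.le_floor.mpr (by simpa using one_le_one_div hx0 hx1)
    refine ⟨(⌊1 / x⌋ - 1).toNat, Int.fract (1 / x),
      ⟨Int.fract_nonneg _, Int.fract_lt_one _⟩, ?_⟩
    have hcast : ((⌊1 / x⌋ - 1).toNat : ℝ) = ⌊1 / x⌋ - 1 := by
      exact_mod_cast Int.toNat_of_nonneg (by omega)
    rw [gaussBranch, hcast, add_assoc, sub_add_cancel, Int.fract_add_floor, one_div, inv_inv]

lemma pairwise_disjoint_image_gaussBranch :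
    Pairwise (Disjoint on fun m : ℕ => gaussBranch m '' Ico 0 1) := by
  intro i j hij
  rw [Function.onFun, disjoint_left]
  rintro _ ⟨y, hy, rfl⟩ ⟨z, hz, hzy⟩
  have := (floor_one_div_gaussBranch j hz).symm.trans (hzy ▸ floor_one_div_gaussBranch i hy)
  exact hij (by omega)

lemma measurableSet_image_gaussBranch (m : ℕ) : MeasurableSet (gaussBranch m '' Ico 0 1) :=
  measurableSet_Ico.image_of_continuousOn_injOn
    (fun _ hy => (hasDerivAt_gaussBranch m hy.1).continuousAt.continuousWithinAt)
    (gaussBranch_injective m).injOn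

lemma setLIntegral_image_gaussBranch (m : ℕ) (g : ℝ → ℝ≥0∞) :
    ∫⁻ x in gaussBranch m '' Ico 0 1, g x
      = ∫⁻ y in Ico 0 1, ENNReal.ofReal ((y + m + 1) ^ 2)⁻¹ * g (gaussBranch m y) := by
  rw [lintegral_image_eq_lintegral_abs_deriv_mul measurableSet_Ico
    (fun y hy => (hasDerivAt_gaussBranch m hy.1).hasDerivWithinAt)
    (gaussBranch_injective m).injOn]
  simp_rw [abs_neg, abs_inv, abs_sq]

lemma hasSum_sub_succ_of_antitone {f : ℕ → ℝ} {l : ℝ} (hf : Antitone f)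
    (hl : Tendsto f atTop (𝓝 l)) : HasSum (fun n => f n - f (n + 1)) (f 0 - l) := by
  rw [hasSum_iff_tendsto_nat_of_nonneg fun n => sub_nonneg.mpr (hf n.le_succ)]
  simpa only [Finset.sum_range_sub'] using tendsto_const_nhds.sub hl

lemma hasSum_inv_mul_inv_add_one {y : ℝ} (hy : 0 ≤ y) :
    HasSum (fun m : ℕ => ((y + m + 1) * (y + m + 2))⁻¹) (y + 1)⁻¹ := by
  have hanti : Antitone fun m : ℕ => (y + m + 1)⁻¹ := fun i j hij =>
    inv_anti₀ (by positivity) (by gcongr)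
  have hlim : Tendsto (fun m : ℕ => (y + m + 1)⁻¹) atTop (𝓝 0) :=
    tendsto_inv_atTop_zero.comp <| tendsto_atTop_add_const_right _ _ <|
      tendsto_atTop_add_const_left _ _ tendsto_natCast_atTop_atTop
  convert hasSum_sub_succ_of_antitone hanti hlim using 1
  · ext m
    push_cast
    field_simp
    ring
  · simp

/-- The Gauss density is a fixed point of the transfer operator of the Gauss map. -/
lemma tsum_mul_gaussDensity_gaussBranch {y : ℝ} (hy : 0 ≤ y) :
    ∑' m : ℕ, ENNReal.ofReal ((y + m + 1) ^ 2)⁻¹ * gaussDensity (gaussBranch m y)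
      = gaussDensity y := by
  have hlog : 0 < Real.log 2 := Real.log_pos one_lt_two
  have hterm (m : ℕ) : ENNReal.ofReal ((y + m + 1) ^ 2)⁻¹ * gaussDensity (gaussBranch m y)
      = ENNReal.ofReal ((Real.log 2)⁻¹ * ((y + m + 1) * (y + m + 2))⁻¹) := by
    rw [gaussDensity, gaussBranch, ← ENNReal.ofReal_mul (by positivity)]
    congr 1
    field_simp
    ring
  rw [tsum_congr hterm, ← ENNReal.ofReal_tsum_of_nonneg (fun m => by positivity)
    ((hasSum_inv_mul_inv_add_one hy).mul_left _).summable,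
    ((hasSum_inv_mul_inv_add_one hy).mul_left _).tsum_eq, gaussDensity]
  congr 1
  field_simp
  ring

lemma lintegral_comp_gaussMap {f : ℝ → ℝ≥0∞} (hf : Measurable f) :
    ∫⁻ x, f (gaussMap x) ∂gaussMeasure = ∫⁻ x, f x ∂gaussMeasure := by
  have hbranch (m : ℕ) : ∫⁻ x in gaussBranch m '' Ico 0 1, gaussDensity x * f (gaussMap x)
      = ∫⁻ y in Ico 0 1,
          ENNReal.ofReal ((y + m + 1) ^ 2)⁻¹ * gaussDensity (gaussBranch m y) * f y := by
    rw [setLIntegral_image_gaussBranch]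
    refine setLIntegral_congr_fun measurableSet_Ico fun y hy => ?_
    rw [gaussMap_gaussBranch m hy, mul_assoc]
  rw [lintegral_gaussMeasure (f := fun x => f (gaussMap x)) (hf.comp measurable_gaussMap),
    lintegral_gaussMeasure hf, setLIntegral_congr Ioo_ae_eq_Ioc, ← iUnion_image_gaussBranch,
    lintegral_iUnion measurableSet_image_gaussBranch pairwise_disjoint_image_gaussBranch,
    tsum_congr hbranch, ← lintegral_tsum fun _ => by fun_prop,
    setLIntegral_congr Ioo_ae_eq_Ico]
  refine setLIntegral_congr_fun measurableSet_Ico fun y hy => ?_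
  rw [ENNReal.tsum_mul_right, tsum_mul_gaussDensity_gaussBranch hy.1]

lemma measurePreserving_gaussMap : MeasurePreserving gaussMap gaussMeasure gaussMeasure := by
  refine ⟨measurable_gaussMap, Measure.ext fun s hs => ?_⟩
  rw [Measure.map_apply measurable_gaussMap hs, ← lintegral_indicator_one hs,
    ← lintegral_indicator_one (measurable_gaussMap hs)]
  exact lintegral_comp_gaussMap (measurable_one.indicator hs)

lemma lintegral_neg_log_pow (k : ℕ) :
    ∫⁻ x in Ioo 0 1, ENNReal.ofReal ((-Real.log x) ^ k) = k ! := by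
  have himage : (fun t => Real.exp (-t)) '' Ioi 0 = Ioo 0 1 := by
    ext x
    constructor
    · rintro ⟨t, ht, rfl⟩
      exact ⟨Real.exp_pos _, Real.exp_lt_one_iff.mpr (neg_neg_of_pos ht)⟩
    · rintro ⟨h0, h1⟩
      exact ⟨-Real.log x, neg_pos.mpr (Real.log_neg h0 h1), by simp [Real.exp_log h0]⟩
  have hgamma (t : ℝ) (ht : t ∈ Ioi 0) :
      ENNReal.ofReal |Real.exp (-t) * -1| * ENNReal.ofReal ((-Real.log (Real.exp (-t))) ^ k)
        = ENNReal.ofReal (Real.exp (-t) * t ^ ((k + 1 : ℝ) - 1)) := by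
    rw [mul_neg_one, abs_neg, abs_of_pos (Real.exp_pos _), Real.log_exp, neg_neg,
      add_sub_cancel_right, Real.rpow_natCast, ENNReal.ofReal_mul (Real.exp_pos _).le]
  rw [← himage, lintegral_image_eq_lintegral_abs_deriv_mul (f := fun t => Real.exp (-t))
      measurableSet_Ioi
      (fun t _ => ((Real.hasDerivAt_exp _).comp t (hasDerivAt_neg t)).hasDerivWithinAt)
      (Real.exp_injective.comp neg_injective).injOn,
    setLIntegral_congr_fun measurableSet_Ioi hgamma,
    ← ofReal_integral_eq_lintegral_ofReal (Real.GammaIntegral_convergent (by positivity))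
      (ae_restrict_of_forall_mem measurableSet_Ioi fun t ht =>
        mul_nonneg (Real.exp_pos _).le (Real.rpow_nonneg (le_of_lt ht) _)),
    ← Real.Gamma_eq_integral (by positivity), Real.Gamma_nat_eq_factorial, ENNReal.ofReal_natCast]

lemma abs_log_floor_one_div_le {x : ℝ} (hx : x ∈ Ioc 0 1) :
    |Real.log ⌊1 / x⌋| ≤ -Real.log x := by
  have hfloor : (1 : ℝ) ≤ ⌊1 / x⌋ := by
    exact_mod_cast Int.le_floor.mpr (by simpa using one_le_one_div hx.1 hx.2)
  rw [abs_of_nonneg (Real.log_nonneg hfloor), ← Real.log_inv, ← one_div]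
  exact Real.log_le_log (by linarith) (Int.floor_le _)

lemma gaussDensity_le {x : ℝ} (hx : 0 ≤ x) :
    gaussDensity x ≤ ENNReal.ofReal (Real.log 2)⁻¹ := by
  have hlog : 0 < Real.log 2 := Real.log_pos one_lt_two
  rw [gaussDensity, one_div]
  gcongr
  nlinarith

lemma Xlog_eq_Xlog_one_iterate (ω : ℝ) (n : ℕ) :
    Xlog ω n = Xlog (gaussMap^[n - 1] ω) 1 := rfl

@[fun_prop]
lemma measurable_Xlog_one : Measurable fun ω => Xlog ω 1 :=
  Real.measurable_log.comp <|
    measurable_from_top.comp (by fun_prop : Measurable fun ω : ℝ => ⌊1 / ω⌋)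

lemma lintegral_abs_Xlog_one_pow_le (k : ℕ) :
    ∫⁻ ω, ENNReal.ofReal (|Xlog ω 1| ^ k) ∂gaussMeasure
      ≤ ENNReal.ofReal (Real.log 2)⁻¹ * k ! := by
  rw [lintegral_gaussMeasure (by fun_prop), ← lintegral_neg_log_pow,
    ← lintegral_const_mul' _ _ ENNReal.ofReal_ne_top]
  refine setLIntegral_mono (by fun_prop) fun x hx => ?_
  gcongr
  · exact gaussDensity_le hx.1.le
  · exact abs_log_floor_one_div_le ⟨hx.1, hx.2.le⟩

lemma integral_abs_Xlog_one_pow_le (k : ℕ) :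
    ∫ ω, |Xlog ω 1| ^ k ∂gaussMeasure ≤ k ! / Real.log 2 := by
  have hlog : 0 < Real.log 2 := Real.log_pos one_lt_two
  rw [integral_eq_lintegral_of_nonneg_ae (ae_of_all _ fun _ => by positivity) (by fun_prop)]
  refine ENNReal.toReal_le_of_le_ofReal (by positivity)
    ((lintegral_abs_Xlog_one_pow_le k).trans_eq ?_)
  rw [← ENNReal.ofReal_natCast, ← ENNReal.ofReal_mul (by positivity), inv_mul_eq_div]

lemma integral_comp_iterate_gaussMap {E : Type*} [NormedAddCommGroup E] [NormedSpace ℝ E]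
    {g : ℝ → E} (hg : AEStronglyMeasurable g gaussMeasure) (j : ℕ) :
    ∫ ω, g (gaussMap^[j] ω) ∂gaussMeasure = ∫ ω, g ω ∂gaussMeasure := by
  have h := measurePreserving_gaussMap.iterate j
  rw [← integral_map h.aemeasurable (by rwa [h.map_eq]), h.map_eq]

lemma rbar_sq : rbar ^ 2 = 3 / (2 * Real.log 2) :=
  Real.sq_sqrt (by positivity)

lemma one_le_rbar : 1 ≤ rbar := by
  rw [rbar, Real.one_le_sqrt, le_div_iff₀ (by positivity)]
  linarith [Real.log_two_lt_d9]

theorem moment_estimate_Xn_general (k : ℕ) (hk : 2 ≤ k) (n : ℕ) :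
    (∫ ω, |Xlog ω n| ^ k ∂gaussMeasure) ≤ 3 / (2 * Real.log 2) * (k.factorial : ℝ)
    ∧ (∫ ω, |Xlog ω n| ^ k ∂gaussMeasure) ≤ (k.factorial : ℝ) * rbar ^ k := by
  have hlog : 0 < Real.log 2 := Real.log_pos one_lt_two
  have hmoment : ∫ ω, |Xlog ω n| ^ k ∂gaussMeasure ≤ k ! / Real.log 2 := by
    simp_rw [Xlog_eq_Xlog_one_iterate _ n]
    rw [integral_comp_iterate_gaussMap (g := fun ω => |Xlog ω 1| ^ k) (by fun_prop)]
    exact integral_abs_Xlog_one_pow_le k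
  have hfirst : ∫ ω, |Xlog ω n| ^ k ∂gaussMeasure ≤ 3 / (2 * Real.log 2) * k ! := by
    refine hmoment.trans ?_
    rw [div_mul_eq_mul_div, div_le_div_iff₀ hlog (by positivity)]
    nlinarith [(by positivity : (0 : ℝ) < k !)]
  refine ⟨hfirst, hfirst.trans ?_⟩
  rw [← rbar_sq, mul_comm]
  gcongr
  exact one_le_rbar

theorem moment_estimate_Xn (k : ℕ) (hk : 2 ≤ k) (n : ℕ) (hn : 1 ≤ n) :
    (∫ ω, |Xlog ω n| ^ k ∂gaussMeasure) ≤ 3 / (2 * Real.log 2) * (k.factorial : ℝ)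
    ∧ (∫ ω, |Xlog ω n| ^ k ∂gaussMeasure) ≤ (k.factorial : ℝ) * rbar ^ k :=
  moment_estimate_Xn_general k hk n
end

section
/- For every integer N ≥ 2 and every real α > 0, with K = ⌈√N⌉, one has Σ_{n=N}^∞ e^{−α√n} ≤ Σ_{n=N}^{K²−1} e^{−α√n} + (e^{−αK}/(1 − e^{−α}))·(2K + 1 + 4e^{−α}/(1 − e^{−α})); in particular, when N = K² is a square of an integer, Σ_{n=N}^∞ e^{−α√n} ≤ (e^{−αK}/(1 − e^{−α}))·(2K + 1 + 4e^{−α}/(1 − e^{−α})). -/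
/-!
Group the integers `n ≥ K²` into the blocks `[m², (m + 1)²)`, `m ≥ K`. Such a block has `2m + 1`
elements and `e^{-α√n} ≤ q^m` on it, where `q = e^{-α}`, so the tail from `K²` on is at most
`∑_{m ≥ K} (2m + 1) q^m = q^K / (1 - q) · (2K + 1 + 2q / (1 - q))`; the terms between `N` and `K²`
are kept as they are.
-/

open Finset Real

theorem Nat.sum_Ico_sq_comp_sqrt {M : Type*} [AddCommMonoid M] (g : ℕ → M) {a b : ℕ}
    (hab : a ≤ b) :
    ∑ n ∈ Ico (a ^ 2) (b ^ 2), g (Nat.sqrt n) = ∑ m ∈ Ico a b, (2 * m + 1) • g m := by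
  induction b, hab using Nat.le_induction with
  | base => simp
  | succ b hab ih =>
    have hblock : ∑ n ∈ Ico (b ^ 2) ((b + 1) ^ 2), g (Nat.sqrt n) = (2 * b + 1) • g b := by
      rw [sum_congr rfl fun n hn => ?_, sum_const, Nat.card_Ico,
        Nat.sub_eq_of_eq_add (by ring : (b + 1) ^ 2 = 2 * b + 1 + b ^ 2)]
      rw [mem_Ico] at hn
      rw [le_antisymm (Nat.lt_succ_iff.mp (Nat.sqrt_lt'.mpr hn.2)) (Nat.le_sqrt'.mpr hn.1)]
    rw [← sum_Ico_consecutive _ (Nat.pow_le_pow_left hab 2) (Nat.pow_le_pow_left b.le_succ 2),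
      ih, hblock, sum_Ico_succ_top hab]

theorem Summable.sum_Ico_add_tsum_nat_add {M : Type*} [AddCommMonoid M] [TopologicalSpace M]
    [T2Space M] [ContinuousAdd M] {f : ℕ → M} {a b : ℕ} (hab : a ≤ b)
    (hf : Summable fun k => f (b + k)) :
    ∑ n ∈ Ico a b, f n + ∑' k, f (b + k) = ∑' k, f (a + k) := by
  have hshift : ∀ k, a + (k + (b - a)) = b + k := fun k => by omega
  have hg : Summable fun k => f (a + (k + (b - a))) := hf.congr fun k => by rw [hshift]
  rw [sum_Ico_eq_sum_range, ← hg.sum_add_tsum_nat_add' (f := fun k => f (a + k))]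
  simp only [hshift]

theorem Real.exp_neg_mul_sqrt_le_pow_sqrt {α : ℝ} (hα : 0 ≤ α) (n : ℕ) :
    exp (-α * √n) ≤ exp (-α) ^ Nat.sqrt n := by
  rw [← exp_nat_mul, exp_le_exp]
  nlinarith [Real.nat_sqrt_le_real_sqrt (a := n)]

theorem hasSum_two_mul_add_one_mul_pow_add {q : ℝ} (hq₀ : 0 ≤ q) (hq₁ : q < 1) (K : ℕ) :
    HasSum (fun j : ℕ => (2 * ((K + j : ℕ) : ℝ) + 1) * q ^ (K + j))
      (q ^ K / (1 - q) * (2 * K + 1 + 2 * q / (1 - q))) := by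
  have hgeom := (hasSum_geometric_of_lt_one hq₀ hq₁).mul_left (2 * (K : ℝ) + 1)
  have harith := (hasSum_coe_mul_geometric_of_norm_lt_one
    (by rwa [norm_of_nonneg hq₀] : ‖q‖ < 1)).mul_left 2
  have hvalue : q ^ K / (1 - q) * (2 * K + 1 + 2 * q / (1 - q))
      = q ^ K * ((2 * K + 1) * (1 - q)⁻¹ + 2 * (q / (1 - q) ^ 2)) := by
    have : 1 - q ≠ 0 := by linarith
    field_simp
  rw [hvalue]
  refine ((hgeom.add harith).mul_left (q ^ K)).congr_fun fun j => ?_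
  push_cast
  ring

theorem sum_range_exp_neg_mul_sqrt_sq_add_le {α : ℝ} (hα : 0 < α) (K n : ℕ) :
    ∑ k ∈ range n, exp (-α * √((K ^ 2 + k : ℕ) : ℝ))
      ≤ exp (-α * K) / (1 - exp (-α)) * (2 * K + 1 + 2 * exp (-α) / (1 - exp (-α))) := by
  set q := exp (-α)
  have hq₁ : q < 1 := exp_lt_one_iff.mpr (by linarith)
  calc ∑ k ∈ range n, exp (-α * √((K ^ 2 + k : ℕ) : ℝ))
      ≤ ∑ k ∈ range n, q ^ Nat.sqrt (K ^ 2 + k) :=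
        sum_le_sum fun k _ => exp_neg_mul_sqrt_le_pow_sqrt hα.le _
    _ = ∑ i ∈ Ico (K ^ 2) (K ^ 2 + n), q ^ Nat.sqrt i := by
        rw [sum_Ico_eq_sum_range, add_tsub_cancel_left]
    _ ≤ ∑ i ∈ Ico (K ^ 2) ((K + n) ^ 2), q ^ Nat.sqrt i :=
        sum_le_sum_of_subset_of_nonneg
          (Ico_subset_Ico_right (by rw [add_sq]; nlinarith [Nat.le_mul_self n]))
          fun _ _ _ => by positivity
    _ = ∑ j ∈ range n, (2 * ((K + j : ℕ) : ℝ) + 1) * q ^ (K + j) := by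
        rw [Nat.sum_Ico_sq_comp_sqrt _ (Nat.le_add_right K n), sum_Ico_eq_sum_range,
          add_tsub_cancel_left]
        simp only [nsmul_eq_mul, Nat.cast_add, Nat.cast_mul, Nat.cast_ofNat, Nat.cast_one]
    _ ≤ q ^ K / (1 - q) * (2 * K + 1 + 2 * q / (1 - q)) :=
        sum_le_hasSum _ (fun j _ => by positivity)
          (hasSum_two_mul_add_one_mul_pow_add (exp_pos _).le hq₁ K)
    _ = _ := by rw [← exp_nat_mul, mul_comm (K : ℝ)]

theorem sum_exp_neg_alpha_sqrt_general (N : ℕ) (α : ℝ) (hα : 0 < α)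
    (K : ℕ) (hK : K = ⌈Real.sqrt N⌉₊) :
    (∑' k : ℕ, Real.exp (-α * Real.sqrt ((N : ℝ) + k))
        ≤ ∑ n ∈ Finset.Ico N (K ^ 2), Real.exp (-α * Real.sqrt (n : ℝ))
          + Real.exp (-α * K) / (1 - Real.exp (-α))
            * (2 * (K : ℝ) + 1 + 4 * Real.exp (-α) / (1 - Real.exp (-α))))
    ∧ (N = K ^ 2 →
        ∑' k : ℕ, Real.exp (-α * Real.sqrt ((N : ℝ) + k))
          ≤ Real.exp (-α * K) / (1 - Real.exp (-α))
            * (2 * (K : ℝ) + 1 + 4 * Real.exp (-α) / (1 - Real.exp (-α)))) := by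
  have hNK : N ≤ K ^ 2 := by
    have : √(N : ℝ) ≤ K := hK ▸ Nat.le_ceil _
    exact_mod_cast (sqrt_le_left (Nat.cast_nonneg K)).mp this
  have hq : 0 < 1 - exp (-α) := sub_pos.mpr (exp_lt_one_iff.mpr (by linarith))
  have hpartial := sum_range_exp_neg_mul_sqrt_sq_add_le hα K
  have hsum := summable_of_sum_range_le (fun _ => (exp_pos _).le) hpartial
  have htail := (tsum_le_of_sum_range_le (fun _ => (exp_pos _).le) hpartial).trans
    (show _ ≤ exp (-α * K) / (1 - exp (-α)) * (2 * K + 1 + 4 * exp (-α) / (1 - exp (-α))) by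
      gcongr; norm_num)
  have hsplit := hsum.sum_Ico_add_tsum_nat_add (f := fun n : ℕ => exp (-α * √(n : ℝ))) hNK
  push_cast at hsplit htail
  rw [← hsplit]
  refine ⟨by linarith, fun hN => ?_⟩
  simpa [hN] using htail

theorem sum_exp_neg_alpha_sqrt (N : ℕ) (hN : 2 ≤ N) (α : ℝ) (hα : 0 < α)
    (K : ℕ) (hK : K = ⌈Real.sqrt N⌉₊) :
    (∑' k : ℕ, Real.exp (-α * Real.sqrt ((N : ℝ) + k))
        ≤ ∑ n ∈ Finset.Ico N (K ^ 2), Real.exp (-α * Real.sqrt (n : ℝ))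
          + Real.exp (-α * K) / (1 - Real.exp (-α))
            * (2 * (K : ℝ) + 1 + 4 * Real.exp (-α) / (1 - Real.exp (-α))))
    ∧ (N = K ^ 2 →
        ∑' k : ℕ, Real.exp (-α * Real.sqrt ((N : ℝ) + k))
          ≤ Real.exp (-α * K) / (1 - Real.exp (-α))
            * (2 * (K : ℝ) + 1 + 4 * Real.exp (-α) / (1 - Real.exp (-α)))) :=
  sum_exp_neg_alpha_sqrt_general N α hα K hK
end
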